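/- arXiv:2308.07062 — 4 statements merged into one kernel-verified Lean document; each statement's English description precedes it below -/
import Mathlib

section
/- Let a and b be coprime integers with a + b ≠ 0. Then 7 divides φ_7(a,b) = a^6 - a^5·b + a^4·b^2 - a^3·b^3 + a^2·b^4 - a·b^5 + b^6 if and only if 7 divides a + b, and in that case the 7-adic valuation of φ_7(a,b) equals 1. -/
lemma zmod7_aux : ∀ A B : ZMod 7,
    (A ^ 6 - A ^ 5 * B + A ^ 4 * B ^ 2 - A ^ 3 * B ^ 3 + A ^ 2 * B ^ 4
      - A * B ^ 5 + B ^ 6 = 0 ↔ A + B = 0) := by decide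

theorem stmt_3 (a b : ℤ) (hab : IsCoprime a b) (hs : a + b ≠ 0) :
    ((7 : ℤ) ∣ (a ^ 6 - a ^ 5 * b + a ^ 4 * b ^ 2 - a ^ 3 * b ^ 3 + a ^ 2 * b ^ 4
        - a * b ^ 5 + b ^ 6) ↔ (7 : ℤ) ∣ a + b) ∧
    ((7 : ℤ) ∣ a + b →
      padicValInt 7 (a ^ 6 - a ^ 5 * b + a ^ 4 * b ^ 2 - a ^ 3 * b ^ 3 + a ^ 2 * b ^ 4
        - a * b ^ 5 + b ^ 6) = 1) := by
  have hp : Fact (Nat.Prime 7) := ⟨by norm_num⟩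
  have key : ∀ x : ℤ, (7 : ℤ) ∣ x ↔ ((x : ZMod 7) = 0) := by
    intro x
    have := (ZMod.intCast_zmod_eq_zero_iff_dvd x 7).symm
    exact_mod_cast this
  constructor
  · rw [key _, key _]
    push_cast
    exact zmod7_aux a b
  · rintro ⟨k, hk⟩
    have h7a : ¬ (7 : ℤ) ∣ a := by
      intro hda
      have hdb : (7 : ℤ) ∣ b := by
        have : b = 7 * k - a := by linarith
        rw [this]; exact dvd_sub ⟨k, rfl⟩ hda
      have := hab.isUnit_of_dvd' hda hdb
      rw [Int.isUnit_iff] at this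
      omega
    have hb : b = 7 * k - a := by linarith
    subst hb
    set c : ℤ := a ^ 6 + 7 * (-3 * k * a ^ 5 + 35 * k ^ 2 * a ^ 4 - 245 * k ^ 3 * a ^ 3
      + 1029 * k ^ 4 * a ^ 2 - 2401 * k ^ 5 * a + 2401 * k ^ 6) with hc
    have hΦ : a ^ 6 - a ^ 5 * (7 * k - a) + a ^ 4 * (7 * k - a) ^ 2
        - a ^ 3 * (7 * k - a) ^ 3 + a ^ 2 * (7 * k - a) ^ 4
        - a * (7 * k - a) ^ 5 + (7 * k - a) ^ 6 = 7 * c := by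
      rw [hc]; ring
    have h7c : ¬ (7 : ℤ) ∣ c := by
      intro hdc
      have h6 : (7 : ℤ) ∣ a ^ 6 := by
        have : a ^ 6 = c - 7 * (-3 * k * a ^ 5 + 35 * k ^ 2 * a ^ 4 - 245 * k ^ 3 * a ^ 3
          + 1029 * k ^ 4 * a ^ 2 - 2401 * k ^ 5 * a + 2401 * k ^ 6) := by rw [hc]; ring
        rw [this]; exact dvd_sub hdc ⟨_, rfl⟩
      exact h7a ((by norm_num : Prime (7 : ℤ)).dvd_of_dvd_pow h6)
    have hc0 : c ≠ 0 := fun h => h7c (h ▸ dvd_zero 7)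
    have hz : padicValInt 7 c = 0 :=
      padicValInt.eq_zero_of_not_dvd (by exact_mod_cast h7c)
    have h77 : padicValInt 7 (7 : ℤ) = 1 := by
      have := padicValInt_self (p := 7)
      exact_mod_cast this
    rw [hΦ, padicValInt.mul (by norm_num) hc0, hz, h77]
end

section
/- Let a and b be coprime integers with 2 ∣ ab. Then the 2-adic valuations of the quantities c₄ = 2⁴·7·(a⁴ - a³b + 3a²b² - ab³ + b⁴), c₆ = 2⁵·7·(a⁶ - 15a⁵b + 15a⁴b² - 29a³b³ + 15a²b⁴ - 15ab⁵ + b⁶) and Δ = 2⁴·7²·φ_7(a,b)² are respectively 4, 5 and 4, where φ_7(a,b) = a⁶ - a⁵b + a⁴b² - a³b³ + a²b⁴ - ab⁵ + b⁶. -/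
lemma key_val2 (n : ℕ) (P : ℤ) (hP : ¬ (2:ℤ) ∣ P) : padicValInt 2 (2 ^ n * P) = n := by
  haveI : Fact (Nat.Prime 2) := ⟨Nat.prime_two⟩
  have hP0 : P ≠ 0 := by rintro rfl; exact hP (dvd_zero _)
  rw [padicValInt.mul (by positivity) hP0, padicValInt.eq_zero_of_not_dvd hP]
  have h : padicValInt 2 (2 ^ n) = n := by
    rw [show ((2:ℤ) ^ n) = ((2 ^ n : ℕ) : ℤ) by push_cast; ring, padicValInt.of_nat,
      padicValNat.prime_pow]
  omega

lemma not_dvd_of_cast_ne (P : ℤ) (h : (P : ZMod 2) ≠ 0) : ¬ (2:ℤ) ∣ P := by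
  intro hd
  exact h ((ZMod.intCast_zmod_eq_zero_iff_dvd P 2).mpr (by exact_mod_cast hd))

theorem stmt_7 (a b : ℤ) (hab : IsCoprime a b) (h2 : (2 : ℤ) ∣ a * b) :
    padicValInt 2 (2 ^ 4 * 7 * (a ^ 4 - a ^ 3 * b + 3 * a ^ 2 * b ^ 2 - a * b ^ 3 + b ^ 4)) = 4 ∧
    padicValInt 2 (2 ^ 5 * 7 * (a ^ 6 - 15 * a ^ 5 * b + 15 * a ^ 4 * b ^ 2 - 29 * a ^ 3 * b ^ 3
      + 15 * a ^ 2 * b ^ 4 - 15 * a * b ^ 5 + b ^ 6)) = 5 ∧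
    padicValInt 2 (2 ^ 4 * 7 ^ 2 * (a ^ 6 - a ^ 5 * b + a ^ 4 * b ^ 2 - a ^ 3 * b ^ 3
      + a ^ 2 * b ^ 4 - a * b ^ 5 + b ^ 6) ^ 2) = 4 := by
  -- parity of a and b in ZMod 2
  have hcases : ((a : ZMod 2) = 0 ∧ (b : ZMod 2) = 1) ∨ ((a : ZMod 2) = 1 ∧ (b : ZMod 2) = 0) := by
    have hdvd : (2:ℤ) ∣ a ∨ (2:ℤ) ∣ b := (Int.prime_two.dvd_mul).mp h2
    have hnot : ¬ ((2:ℤ) ∣ a ∧ (2:ℤ) ∣ b) := by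
      rintro ⟨ha, hb⟩
      have := hab.isUnit_of_dvd' ha hb
      rw [Int.isUnit_iff] at this
      omega
    have fa : ∀ x : ZMod 2, x = 0 ∨ x = 1 := by decide
    rcases hdvd with h | h
    · left
      have ha : (a : ZMod 2) = 0 := (ZMod.intCast_zmod_eq_zero_iff_dvd a 2).mpr h
      have hb : ¬ (2:ℤ) ∣ b := fun hb => hnot ⟨h, hb⟩
      have : (b : ZMod 2) ≠ 0 := fun hc => hb ((ZMod.intCast_zmod_eq_zero_iff_dvd b 2).mp hc)
      exact ⟨ha, (fa _).resolve_left this⟩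
    · right
      have hb : (b : ZMod 2) = 0 := (ZMod.intCast_zmod_eq_zero_iff_dvd b 2).mpr h
      have ha : ¬ (2:ℤ) ∣ a := fun ha => hnot ⟨ha, h⟩
      have : (a : ZMod 2) ≠ 0 := fun hc => ha ((ZMod.intCast_zmod_eq_zero_iff_dvd a 2).mp hc)
      exact ⟨(fa _).resolve_left this, hb⟩
  have odd1 : ¬ (2:ℤ) ∣ 7 * (a ^ 4 - a ^ 3 * b + 3 * a ^ 2 * b ^ 2 - a * b ^ 3 + b ^ 4) := by
    apply not_dvd_of_cast_ne; push_cast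
    rcases hcases with ⟨ha, hb⟩ | ⟨ha, hb⟩ <;> rw [ha, hb] <;> decide
  have odd2 : ¬ (2:ℤ) ∣ 7 * (a ^ 6 - 15 * a ^ 5 * b + 15 * a ^ 4 * b ^ 2 - 29 * a ^ 3 * b ^ 3
      + 15 * a ^ 2 * b ^ 4 - 15 * a * b ^ 5 + b ^ 6) := by
    apply not_dvd_of_cast_ne; push_cast
    rcases hcases with ⟨ha, hb⟩ | ⟨ha, hb⟩ <;> rw [ha, hb] <;> decide
  have odd3 : ¬ (2:ℤ) ∣ 7 ^ 2 * (a ^ 6 - a ^ 5 * b + a ^ 4 * b ^ 2 - a ^ 3 * b ^ 3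
      + a ^ 2 * b ^ 4 - a * b ^ 5 + b ^ 6) ^ 2 := by
    apply not_dvd_of_cast_ne; push_cast
    rcases hcases with ⟨ha, hb⟩ | ⟨ha, hb⟩ <;> rw [ha, hb] <;> decide
  refine ⟨?_, ?_, ?_⟩
  · rw [mul_assoc]; exact key_val2 4 _ odd1
  · rw [mul_assoc]; exact key_val2 5 _ odd2
  · rw [mul_assoc]; exact key_val2 4 _ odd3
end

section
/- Let a, b be coprime integers with a + b ≠ 0. If φ_7(a,b) = (a^7+b^7)/(a+b) equals ±1 or ±7, then (a,b) ∈ {(1,1), (-1,-1), (1,0), (-1,0), (0,1), (0,-1)}. -/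
private lemma even_pow_nonneg (n : ℤ) : 0 ≤ n ^ 6 := by positivity

private lemma aux_six (n : ℤ) (h : n ^ 6 ≤ 14) : -1 ≤ n ∧ n ≤ 1 := by
  by_contra hc
  have h2 : 2 ≤ |n| := by rcases abs_cases n with ⟨e, _⟩ | ⟨e, _⟩ <;> omega
  have h3 : (2:ℤ) ^ 6 ≤ |n| ^ 6 := pow_le_pow_left₀ (by norm_num) h2 6
  rw [pow_abs, abs_of_nonneg (even_pow_nonneg n)] at h3
  omega


theorem stmt_13 (a b : ℤ) (hab : IsCoprime a b) (hs : a + b ≠ 0)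
    (h : (a ^ 6 - a ^ 5 * b + a ^ 4 * b ^ 2 - a ^ 3 * b ^ 3 + a ^ 2 * b ^ 4
        - a * b ^ 5 + b ^ 6 = 1) ∨
      (a ^ 6 - a ^ 5 * b + a ^ 4 * b ^ 2 - a ^ 3 * b ^ 3 + a ^ 2 * b ^ 4
        - a * b ^ 5 + b ^ 6 = -1) ∨
      (a ^ 6 - a ^ 5 * b + a ^ 4 * b ^ 2 - a ^ 3 * b ^ 3 + a ^ 2 * b ^ 4
        - a * b ^ 5 + b ^ 6 = 7) ∨
      (a ^ 6 - a ^ 5 * b + a ^ 4 * b ^ 2 - a ^ 3 * b ^ 3 + a ^ 2 * b ^ 4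
        - a * b ^ 5 + b ^ 6 = -7)) :
    (a, b) = (1, 1) ∨ (a, b) = (-1, -1) ∨ (a, b) = (1, 0) ∨ (a, b) = (-1, 0) ∨
      (a, b) = (0, 1) ∨ (a, b) = (0, -1) := by
  have h7 : a ^ 6 - a ^ 5 * b + a ^ 4 * b ^ 2 - a ^ 3 * b ^ 3 + a ^ 2 * b ^ 4
      - a * b ^ 5 + b ^ 6 ≤ 7 := by rcases h with h | h | h | h <;> omega
  have key : a ^ 6 + b ^ 6 ≤ 14 := by
    have hsos : (0:ℤ) ≤ (a - b) ^ 2 * (a ^ 4 + a ^ 2 * b ^ 2 + b ^ 4) := by positivity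
    nlinarith [hsos]
  have ha1 := aux_six a (by nlinarith [even_pow_nonneg b])
  have hb1 := aux_six b (by nlinarith [even_pow_nonneg a])
  obtain ⟨ha, ha'⟩ := ha1
  obtain ⟨hb, hb'⟩ := hb1
  interval_cases a <;> interval_cases b <;> simp_all <;> omega
end

section
/- Let a, b, c be integers with abc ≠ 0, gcd(a,b,c) = 1, and a^7 + b^7 = 3c^p for a prime p ≥ 5. If 2 divides a + b then 4 divides a + b. -/
/-!
Since `a + b` is even, so is `a ^ 7 + b ^ 7 = 3 * c ^ p`, hence `c` is even; coprimality then forces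
`a` and `b` to be odd. Now `2 ^ p ∣ c ^ p` with `p ≥ 3` gives `8 ∣ a ^ 7 + b ^ 7`, while odd squares are
`1` mod `8`, so `a ^ 7 + b ^ 7 ≡ a + b [ZMOD 8]`. Thus even `8 ∣ a + b`.
-/

namespace Int

theorem pow_modEq_self_of_odd {x : ℤ} (hx : Odd x) {n : ℕ} (hn : Odd n) : x ^ n ≡ x [ZMOD 8] := by
  obtain ⟨k, rfl⟩ := hn
  have hsq : x ^ 2 ≡ 1 [ZMOD 8] := (Int.modEq_iff_dvd.2 (eight_dvd_sq_sub_one_of_odd hx)).symm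
  calc x ^ (2 * k + 1) = (x ^ 2) ^ k * x := by ring
    _ ≡ 1 ^ k * x [ZMOD 8] := (hsq.pow k).mul_right x
    _ = x := by ring

theorem eight_dvd_add_of_eight_dvd_pow_add_pow {a b : ℤ} (ha : Odd a) (hb : Odd b) {n : ℕ}
    (hn : Odd n) (h : 8 ∣ a ^ n + b ^ n) : 8 ∣ a + b :=
  ((pow_modEq_self_of_odd ha hn).add (pow_modEq_self_of_odd hb hn)).dvd_iff.1 h

theorem odd_of_even_add_of_even_of_gcd_eq_one {a b c : ℤ} (hprim : Int.gcd a (Int.gcd b c) = 1)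
    (hab : Even (a + b)) (hc : Even c) : Odd a ∧ Odd b := by
  by_contra hodd
  have ha : 2 ∣ a := by grind [Int.even_add, even_iff_two_dvd]
  have hb : 2 ∣ b := by grind [Int.even_add, even_iff_two_dvd]
  have : (2 : ℤ) ∣ (Int.gcd a (Int.gcd b c) : ℤ) :=
    Int.dvd_coe_gcd ha (Int.dvd_coe_gcd hb (even_iff_two_dvd.1 hc))
  rw [hprim] at this
  norm_num at this

end Int

theorem stmt_16_general (a b c : ℤ) (p : ℕ) (hp5 : 5 ≤ p)
    (hprim : Int.gcd a (Int.gcd b c) = 1)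
    (heq : a ^ 7 + b ^ 7 = 3 * c ^ p) (h2 : (2 : ℤ) ∣ a + b) :
    (4 : ℤ) ∣ a + b := by
  have hab : Even (a + b) := even_iff_two_dvd.2 h2
  have hc : Even c := by
    have : Even (3 * c ^ p) := by
      rw [← heq]
      simpa [Int.even_add, Int.even_pow] using hab
    simpa [Int.even_mul, Int.even_pow, show ¬Even (3 : ℤ) by decide, show p ≠ 0 by omega] using this
  obtain ⟨ha, hb⟩ := Int.odd_of_even_add_of_even_of_gcd_eq_one hprim hab hc
  have h8 : (8 : ℤ) ∣ c ^ p :=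
    (pow_dvd_pow 2 (by omega : 3 ≤ p)).trans (pow_dvd_pow_of_dvd (even_iff_two_dvd.1 hc) p)
  have : (8 : ℤ) ∣ a + b :=
    Int.eight_dvd_add_of_eight_dvd_pow_add_pow ha hb (by decide) (heq ▸ h8.mul_left 3)
  exact (by norm_num : (4 : ℤ) ∣ 8).trans this

theorem stmt_16 (a b c : ℤ) (p : ℕ) (hp : p.Prime) (hp5 : 5 ≤ p)
    (hnt : a * b * c ≠ 0) (hprim : Int.gcd a (Int.gcd b c) = 1)
    (heq : a ^ 7 + b ^ 7 = 3 * c ^ p) (h2 : (2 : ℤ) ∣ a + b) :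
    (4 : ℤ) ∣ a + b :=
  stmt_16_general a b c p hp5 hprim heq h2
end
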